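/- arXiv:0905.1825 — 2 statements merged into one kernel-verified Lean document; each statement's English description precedes it below -/
import Mathlib

section
/- Setting Ū₁ = lim_{s→+∞} U₁(s) and Ū₂ = lim_{s→+∞} U₂(s), for every fixed η₁ ∈ L²([-T,0];ℝ) one has lim_{η₀→+∞} V(η₀,η₁) = (Ū₁ + Ū₂)/ρ. -/
open MeasureTheory Real Set Filter Topology

noncomputable section

/-- Lebesgue measure restricted to the interval `[-T,0]`. -/
def μT (T : ℝ) : Measure ℝ := volume.restrict (Icc (-T) 0)

/-- The space `H = ℝ × L²([-T,0];ℝ)`. -/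
abbrev Hsp (T : ℝ) := ℝ × Lp ℝ 2 (μT T)
/-- Hypotheses on the delay kernel `a`: it belongs to `W^{1,2}([-T,0];ℝ)`
(it has an a.e. derivative `a'` in `L²`), is nonnegative, and vanishes at `-T`. -/
structure AHyp (T : ℝ) (a : ℝ → ℝ) : Prop where
  mem : MemLp a 2 (μT T)
  w12 : ∃ a' : ℝ → ℝ, MemLp a' 2 (μT T) ∧
    ∀ s ∈ Icc (-T) (0:ℝ), a s = a (-T) + ∫ ξ in (-T)..s, a' ξ
  nonneg : ∀ s ∈ Icc (-T) (0:ℝ), 0 ≤ a s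
  zeroT : a (-T) = 0

/-- Hypotheses on `f₀`: jointly concave, nondecreasing in the second variable,
Lipschitz continuous with constant `Cf`, positive at `(0,y)` for `y > 0`, and
extended by `f₀(x,y) = f₀(0,y)` for `x < 0`. -/
structure FHyp (Cf : ℝ) (f₀ : ℝ × ℝ → ℝ) : Prop where
  conc : ConcaveOn ℝ univ f₀
  mono : ∀ x : ℝ, Monotone fun y => f₀ (x, y)
  lip : LipschitzWith (Real.toNNReal Cf) f₀
  pos : ∀ y : ℝ, 0 < y → 0 < f₀ (0, y)
  extneg : ∀ x : ℝ, x < 0 → ∀ y : ℝ, f₀ (x, y) = f₀ (0, y)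
/-- A control: a locally integrable, a.e. nonnegative function on `[0,∞)`. -/
def IsControl (c : ℝ → ℝ) : Prop :=
  (∀ᵐ t ∂(volume.restrict (Ici (0:ℝ))), 0 ≤ c t) ∧ LocallyIntegrableOn c (Ici 0)

/-- `x : ℝ → ℝ` solves the delay state equation with initial datum `(η₀, η₁)`
and control `c`: `x = η₁` a.e. on `[-T,0)` and for all `t ≥ 0`,
`x(t) = η₀ + ∫₀ᵗ [r x(s) + f₀(x(s), ∫_{-T}^0 a(ξ)x(s+ξ)dξ) - c(s)] ds`. -/
def IsSol (T r : ℝ) (a : ℝ → ℝ) (f₀ : ℝ × ℝ → ℝ) (η₀ : ℝ) (η₁ : Lp ℝ 2 (μT T))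
    (c : ℝ → ℝ) (x : ℝ → ℝ) : Prop :=
  (∀ᵐ s ∂(volume.restrict (Ico (-T) (0:ℝ))), x s = η₁ s) ∧
  ∀ t : ℝ, 0 ≤ t → x t = η₀ + ∫ s in (0:ℝ)..t,
      (r * x s + f₀ (x s, ∫ ξ in (-T)..(0:ℝ), a ξ * x (s + ξ)) - c s)
/-- Hypotheses on the utility functions `U₁, U₂`. -/
structure UHyp (ρ Cf : ℝ) (U₁ U₂ : ℝ → ℝ) : Prop where
  u1_cont : ContinuousOn U₁ (Ici 0)
  u1_c2 : ContDiffOn ℝ 2 U₁ (Ioi 0)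
  u1_deriv_pos : ∀ t : ℝ, 0 < t → 0 < deriv U₁ t
  u1_deriv_top : Tendsto (deriv U₁) (𝓝[>] (0:ℝ)) atTop
  u1_deriv2_neg : ∀ t : ℝ, 0 < t → deriv (deriv U₁) t < 0
  u1_bdd : ∃ M : ℝ, ∀ t : ℝ, 0 ≤ t → |U₁ t| ≤ M
  u2_cont : ContinuousOn U₂ (Ioi 0)
  u2_mono : MonotoneOn U₂ (Ioi 0)
  u2_conc : ConcaveOn ℝ (Ioi 0) U₂
  u2_bddAbove : ∃ M : ℝ, ∀ t : ℝ, 0 < t → U₂ t ≤ M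
  u2_int : IntegrableOn (fun t => Real.exp (-ρ * t) * U₂ (Real.exp (-Cf * t))) (Ioi 0)
/-- The discounted running payoff `t ↦ e^{-ρt}(U₁(c(t)) + U₂(x(t)))`. -/
def payoff (ρ : ℝ) (U₁ U₂ : ℝ → ℝ) (c x : ℝ → ℝ) : ℝ → ℝ :=
  fun t => Real.exp (-ρ * t) * (U₁ (c t) + U₂ (x t))

/-- The set of finite values `J(η;c)` attained by admissible controls `c ∈ 𝒞(η)`
(i.e. controls whose state trajectory stays strictly positive) with integrable
payoff.  Since `U₁, U₂` are bounded above, `J(η;c) > -∞` exactly when the payoff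
is integrable. -/
def Jset (T r ρ : ℝ) (a : ℝ → ℝ) (f₀ : ℝ × ℝ → ℝ) (U₁ U₂ : ℝ → ℝ) (η : Hsp T) :
    Set ℝ :=
  { v | ∃ c x : ℝ → ℝ, IsControl c ∧ IsSol T r a f₀ η.1 η.2 c x ∧
      (∀ t : ℝ, 0 ≤ t → 0 < x t) ∧
      IntegrableOn (payoff ρ U₁ U₂ c x) (Ioi 0) ∧
      v = ∫ t in Ioi (0:ℝ), payoff ρ U₁ U₂ c x t }

/-- The value function `V(η) = sup_{c ∈ 𝒞(η)} J(η;c)`. -/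
def Vfn (T r ρ : ℝ) (a : ℝ → ℝ) (f₀ : ℝ × ℝ → ℝ) (U₁ U₂ : ℝ → ℝ) (η : Hsp T) : ℝ :=
  sSup (Jset T r ρ a f₀ U₁ U₂ η)

/-- The domain `D(V) = {η ∈ H₊ : V(η) > -∞}` of the value function. -/
def DV (T r ρ : ℝ) (a : ℝ → ℝ) (f₀ : ℝ × ℝ → ℝ) (U₁ U₂ : ℝ → ℝ) : Set (Hsp T) :=
  { η | 0 < η.1 ∧ (Jset T r ρ a f₀ U₁ U₂ η).Nonempty }


/-!
Every admissible payoff is bounded by `∫ e^{-ρt}(Ū₁ + Ū₂) dt = (Ū₁ + Ū₂)/ρ`, because `U₁` and `U₂`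
increase to their limits. Conversely, with `K = max C_f 0`, the feedback control
`c = (r + K) x + f₀(x, ∫ a x)` makes the state decay as `x(t) = η₀ e^{-Kt}`. Since `a ≥ 0` and `f₀`
is monotone in the delay variable, the initial history only enters through a bound `-B` on the
delay term, and `c ≥ r x + f₀(0, -B)`; so `c ≥ 0` once `η₀` is large, while `c(t)` and `x(t)`
tend to `∞` with `η₀`. The payoffs are dominated by `e^{-ρt}(M + |U₂(e^{-Kt})|)`, integrable by
assumption, and dominated convergence gives the matching lower bound.
-/

theorem MonotoneOn.ge_of_tendsto_atTop {α β : Type*} [SemilatticeSup α] [Nonempty α]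
    [TopologicalSpace β] [Preorder β] [ClosedIciTopology β] {f : α → β} {s : Set α} {l : β}
    {x : α} (hf : MonotoneOn f s) (hs : ∀ᶠ y in atTop, y ∈ s) (hl : Tendsto f atTop (𝓝 l))
    (hx : x ∈ s) : f x ≤ l :=
  ge_of_tendsto hl <| by
    filter_upwards [hs, eventually_ge_atTop x] with y hy hxy using hf hx hy hxy

theorem tendsto_csSup_of_eventually_mem {ι : Type*} {l : Filter ι} {S : ι → Set ℝ} {J : ι → ℝ}
    {b : ℝ} (hJ : ∀ᶠ i in l, J i ∈ S i) (hS : ∀ i, ∀ v ∈ S i, v ≤ b)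
    (hlim : Tendsto J l (𝓝 b)) : Tendsto (fun i => sSup (S i)) l (𝓝 b) :=
  tendsto_of_tendsto_of_tendsto_of_le_of_le' hlim tendsto_const_nhds
    (hJ.mono fun i hi => le_csSup ⟨b, hS i⟩ hi)
    (hJ.mono fun i hi => csSup_le ⟨J i, hi⟩ (hS i))

theorem integral_Ioi_exp_neg_mul_mul {ρ : ℝ} (hρ : 0 < ρ) (C : ℝ) :
    ∫ t in Ioi (0 : ℝ), exp (-ρ * t) * C = C / ρ := by
  rw [integral_mul_const, integral_exp_mul_Ioi (neg_neg_iff_pos.2 hρ)]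
  simp only [mul_zero, exp_zero]
  ring

theorem LipschitzWith.sub_mul_abs_le {K : NNReal} {f : ℝ × ℝ → ℝ} (hf : LipschitzWith K f)
    (x y : ℝ) : f (0, y) - K * |x| ≤ f (x, y) := by
  have h := hf.dist_le_mul (x, y) (0, y)
  simp only [Prod.dist_eq, dist_self, Real.dist_eq, sub_zero] at h
  rw [max_eq_left (abs_nonneg x)] at h
  linarith [(abs_le.1 h).1]

theorem apply_zero_nonneg_of_pos {f : ℝ × ℝ → ℝ} (hf : Continuous f)
    (hpos : ∀ y, 0 < y → 0 < f (0, y)) : 0 ≤ f (0, 0) :=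
  ge_of_tendsto (x := 𝓝[>] 0)
    (((hf.comp (Continuous.prodMk_right 0)).tendsto 0).mono_left nhdsWithin_le_nhds)
    (eventually_nhdsWithin_of_forall fun y hy => (hpos y hy).le)

theorem abs_mul_le_add_sq_div_two (x y : ℝ) : |x * y| ≤ (x ^ 2 + y ^ 2) / 2 := by
  rw [abs_mul]
  nlinarith [sq_nonneg (|x| - |y|), sq_abs x, sq_abs y]

theorem IsControl.of_bounded {c : ℝ → ℝ} {M : ℝ} (hm : AEStronglyMeasurable c volume)
    (h0 : ∀ s ∈ Ici (0 : ℝ), 0 ≤ c s) (hb : ∀ s ∈ Ici (0 : ℝ), ‖c s‖ ≤ M) : IsControl c :=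
  ⟨(ae_restrict_iff' measurableSet_Ici).2 (ae_of_all _ h0),
    (locallyIntegrableOn_iff isClosed_Ici.isLocallyClosed).2 fun _k hk hkc =>
      Measure.integrableOn_of_bounded hkc.measure_lt_top.ne hm
        (ae_restrict_of_forall_mem hkc.isClosed.measurableSet fun s hs => hb s (hk hs))⟩

section Payoff

variable {ρ : ℝ} {U₁ U₂ c x : ℝ → ℝ}

theorem integral_payoff_le {Ub₁ Ub₂ : ℝ} (hρ : 0 < ρ) (hU₁ : ∀ s, 0 ≤ s → U₁ s ≤ Ub₁)
    (hU₂ : ∀ s, 0 < s → U₂ s ≤ Ub₂) (hc : ∀ᵐ t ∂volume.restrict (Ioi 0), 0 ≤ c t)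
    (hx : ∀ t, 0 ≤ t → 0 < x t) (hint : IntegrableOn (payoff ρ U₁ U₂ c x) (Ioi 0)) :
    ∫ t in Ioi 0, payoff ρ U₁ U₂ c x t ≤ (Ub₁ + Ub₂) / ρ := by
  calc ∫ t in Ioi 0, payoff ρ U₁ U₂ c x t
      ≤ ∫ t in Ioi 0, exp (-ρ * t) * (Ub₁ + Ub₂) := by
        refine integral_mono_ae hint ((exp_neg_integrableOn_Ioi 0 hρ).mul_const _) ?_
        filter_upwards [hc, ae_restrict_mem measurableSet_Ioi] with t hct ht
        exact mul_le_mul_of_nonneg_left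
          (add_le_add (hU₁ _ hct) (hU₂ _ (hx t (le_of_lt ht)))) (exp_nonneg _)
    _ = (Ub₁ + Ub₂) / ρ := integral_Ioi_exp_neg_mul_mul hρ _

theorem le_of_mem_Jset {T r : ℝ} {a : ℝ → ℝ} {f₀ : ℝ × ℝ → ℝ} {Ub₁ Ub₂ : ℝ} {η : Hsp T}
    {v : ℝ} (hρ : 0 < ρ) (hU₁ : ∀ s, 0 ≤ s → U₁ s ≤ Ub₁) (hU₂ : ∀ s, 0 < s → U₂ s ≤ Ub₂)
    (hv : v ∈ Jset T r ρ a f₀ U₁ U₂ η) : v ≤ (Ub₁ + Ub₂) / ρ := by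
  obtain ⟨c, x, hc, -, hx, hint, rfl⟩ := hv
  exact integral_payoff_le hρ hU₁ hU₂
    (ae_mono (Measure.restrict_mono Ioi_subset_Ici_self le_rfl) hc.1) hx hint

theorem aestronglyMeasurable_payoff (hU₁ : ContinuousOn U₁ (Ici 0))
    (hU₂ : ContinuousOn U₂ (Ioi 0)) (hc : AEStronglyMeasurable c (volume.restrict (Ioi 0)))
    (hc0 : ∀ t ∈ Ioi (0 : ℝ), 0 ≤ c t) (hx : ContinuousOn x (Ioi 0))
    (hx0 : ∀ t ∈ Ioi (0 : ℝ), 0 < x t) :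
    AEStronglyMeasurable (payoff ρ U₁ U₂ c x) (volume.restrict (Ioi 0)) := by
  have hU₁c : AEStronglyMeasurable (fun t => U₁ (c t)) (volume.restrict (Ioi 0)) := by
    -- `U₁ (max · 0)` is a continuous extension of `U₁` to all of `ℝ`
    refine ((hU₁.comp_continuous (continuous_id.max continuous_const) fun y =>
      le_max_right y 0).comp_aestronglyMeasurable hc).congr ?_
    filter_upwards [ae_restrict_mem measurableSet_Ioi] with t ht
    simp [max_eq_left (hc0 t ht)]
  have hU₂x : AEStronglyMeasurable (fun t => U₂ (x t)) (volume.restrict (Ioi 0)) :=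
    (hU₂.comp hx hx0).aestronglyMeasurable measurableSet_Ioi
  exact (by fun_prop : Continuous fun t : ℝ => exp (-ρ * t)).aestronglyMeasurable.mul
    (hU₁c.add hU₂x)

theorem norm_payoff_le {t y M₁ M₂ : ℝ} (h₁ : |U₁ (c t)| ≤ M₁) (h₂ : U₂ y ≤ U₂ (x t))
    (h₃ : U₂ (x t) ≤ M₂) :
    ‖payoff ρ U₁ U₂ c x t‖ ≤ exp (-ρ * t) * (M₁ + |M₂|) + |exp (-ρ * t) * U₂ y| := by
  have hU₂ : |U₂ (x t)| ≤ |U₂ y| + |M₂| :=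
    (abs_le_max_abs_abs h₂ h₃).trans (max_le_add_of_nonneg (abs_nonneg _) (abs_nonneg _))
  have h : |U₁ (c t) + U₂ (x t)| ≤ M₁ + |M₂| + |U₂ y| :=
    (abs_add_le _ _).trans (by linarith)
  rw [Real.norm_eq_abs, payoff, abs_mul, abs_mul, abs_of_pos (exp_pos _)]
  nlinarith [exp_pos (-ρ * t)]

theorem tendsto_integral_payoff {ι : Type*} {l : Filter ι} [l.IsCountablyGenerated]
    {c x : ι → ℝ → ℝ} {bound : ℝ → ℝ} {Ub₁ Ub₂ : ℝ} (hρ : 0 < ρ)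
    (hmeas : ∀ᶠ i in l, AEStronglyMeasurable (payoff ρ U₁ U₂ (c i) (x i))
      (volume.restrict (Ioi 0)))
    (hbound : ∀ᶠ i in l, ∀ t ∈ Ioi (0 : ℝ), ‖payoff ρ U₁ U₂ (c i) (x i) t‖ ≤ bound t)
    (hint : IntegrableOn bound (Ioi 0))
    (hc : ∀ t ∈ Ioi (0 : ℝ), Tendsto (fun i => c i t) l atTop)
    (hx : ∀ t ∈ Ioi (0 : ℝ), Tendsto (fun i => x i t) l atTop)
    (hU₁ : Tendsto U₁ atTop (𝓝 Ub₁)) (hU₂ : Tendsto U₂ atTop (𝓝 Ub₂)) :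
    Tendsto (fun i => ∫ t in Ioi 0, payoff ρ U₁ U₂ (c i) (x i) t) l
      (𝓝 ((Ub₁ + Ub₂) / ρ)) := by
  rw [← integral_Ioi_exp_neg_mul_mul hρ]
  refine tendsto_integral_filter_of_dominated_convergence bound hmeas
    (hbound.mono fun i hi => (ae_restrict_iff' measurableSet_Ioi).2 (ae_of_all _ hi)) hint
    ((ae_restrict_iff' measurableSet_Ioi).2 (ae_of_all _ fun t ht => ?_))
  exact ((hU₁.comp (hc t ht)).add (hU₂.comp (hx t ht))).const_mul _

end Payoff

def history (T : ℝ) (w : ℝ → ℝ) : ℝ → ℝ := (Ico (-T) 0).indicator w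

theorem integrable_history_sq {T : ℝ} {w : ℝ → ℝ}
    (hw : IntegrableOn (fun u => w u ^ 2) (Ico (-T) 0)) :
    Integrable fun u => history T w u ^ 2 := by
  have : (fun u => history T w u ^ 2) = (Ico (-T) 0).indicator fun u => w u ^ 2 := by
    ext u
    by_cases hu : u ∈ Ico (-T) 0 <;> simp [history, hu]
  exact this ▸ hw.integrable_indicator measurableSet_Ico

def decayPath (T L η₀ : ℝ) (w : ℝ → ℝ) : ℝ → ℝ :=
  history T w + (Ici 0).indicator fun s => η₀ * exp (-(L * s))

def delayTerm (T : ℝ) (a x : ℝ → ℝ) (s : ℝ) : ℝ := ∫ ξ in (-T)..0, a ξ * x (s + ξ)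

/-- The control under which the state equation reduces to `x' = -L x` for `t ≥ 0`. -/
def decayControl (T r L : ℝ) (a : ℝ → ℝ) (f₀ : ℝ × ℝ → ℝ) (x : ℝ → ℝ) (s : ℝ) : ℝ :=
  (r + L) * x s + f₀ (x s, delayTerm T a x s)

/-- Young's inequality bound on `|∫ a(ξ) history(s + ξ) dξ|`, uniform in `s`. -/
def historyBound (T : ℝ) (a w : ℝ → ℝ) : ℝ :=
  ((∫ ξ in Ioc (-T) 0, a ξ ^ 2) + ∫ u, history T w u ^ 2) / 2

section DecayPath

variable {T L η₀ s : ℝ} {a w : ℝ → ℝ}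

theorem decayPath_of_nonneg (hs : 0 ≤ s) : decayPath T L η₀ w s = η₀ * exp (-(L * s)) := by
  simp [decayPath, history, hs, not_lt.2 hs]

theorem decayPath_of_mem_Ico (hs : s ∈ Ico (-T) 0) : decayPath T L η₀ w s = w s := by
  simp [decayPath, history, hs, not_le.2 hs.2]

theorem decayPath_nonneg_of_nonneg (hη₀ : 0 ≤ η₀) (hs : 0 ≤ s) : 0 ≤ decayPath T L η₀ w s := by
  rw [decayPath_of_nonneg hs]
  positivity

theorem decayPath_pos (hη₀ : 0 < η₀) (hs : 0 ≤ s) : 0 < decayPath T L η₀ w s := by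
  rw [decayPath_of_nonneg hs]
  positivity

theorem tendsto_decayPath_atTop (hs : 0 ≤ s) :
    Tendsto (fun η₀ => decayPath T L η₀ w s) atTop atTop := by
  simp only [decayPath_of_nonneg hs]
  exact tendsto_id.atTop_mul_const (exp_pos _)

theorem history_le_decayPath (hη₀ : 0 ≤ η₀) (u : ℝ) : history T w u ≤ decayPath T L η₀ w u :=
  le_add_of_nonneg_right (indicator_nonneg (fun _ _ => by positivity) u)

theorem abs_decayPath_le (hη₀ : 0 ≤ η₀) (hL : 0 ≤ L) (u : ℝ) :
    |decayPath T L η₀ w u| ≤ |history T w u| + η₀ := by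
  refine (abs_add_le _ _).trans (add_le_add_right ?_ _)
  by_cases hu : u ∈ Ici (0 : ℝ)
  · rw [indicator_of_mem hu, abs_of_nonneg (by positivity)]
    exact mul_le_of_le_one_right hη₀ (exp_le_one_iff.2 (by nlinarith [mem_Ici.1 hu]))
  · simpa [indicator_of_notMem hu] using hη₀

theorem stronglyMeasurable_decayPath (hw : StronglyMeasurable w) :
    StronglyMeasurable (decayPath T L η₀ w) :=
  (hw.indicator measurableSet_Ico).add
    ((by fun_prop : Continuous fun s => η₀ * exp (-(L * s))).stronglyMeasurable.indicator
      measurableSet_Ici)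

theorem continuousOn_decayPath : ContinuousOn (decayPath T L η₀ w) (Ioi 0) :=
  (by fun_prop : Continuous fun s => η₀ * exp (-(L * s))).continuousOn.congr
    fun _s hs => decayPath_of_nonneg (le_of_lt hs)

theorem abs_mul_decayPath_le (hη₀ : 0 ≤ η₀) (hL : 0 ≤ L) (ξ s : ℝ) :
    |a ξ * decayPath T L η₀ w (s + ξ)| ≤
      (a ξ ^ 2 + history T w (s + ξ) ^ 2) / 2 + η₀ * |a ξ| := by
  have h := abs_mul_le_add_sq_div_two (a ξ) (history T w (s + ξ))
  rw [abs_mul] at h ⊢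
  nlinarith [abs_decayPath_le (T := T) (w := w) hη₀ hL (s + ξ), abs_nonneg (a ξ)]

theorem isSol_decayPath {r η₀ : ℝ} {f₀ : ℝ × ℝ → ℝ} (η₁ : Lp ℝ 2 (μT T)) :
    IsSol T r a f₀ η₀ η₁ (decayControl T r L a f₀ (decayPath T L η₀ η₁))
      (decayPath T L η₀ η₁) := by
  refine ⟨(ae_restrict_iff' measurableSet_Ico).2 (ae_of_all _ fun s hs =>
    decayPath_of_mem_Ico hs), fun t ht => ?_⟩
  have hderiv : ∀ u, HasDerivAt (fun v => η₀ * exp (-(L * v)))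
      (-(L * (η₀ * exp (-(L * u))))) u := fun u => by
    have h : HasDerivAt (fun v => -(L * v)) (-L) u := by
      simpa using ((hasDerivAt_id' u).const_mul L).fun_neg
    exact (h.exp.const_mul η₀).congr_deriv (by ring)
  rw [intervalIntegral.integral_congr (g := fun u => -(L * (η₀ * exp (-(L * u))))) ?_,
    intervalIntegral.integral_eq_sub_of_hasDerivAt (fun u _ => hderiv u)
      ((by fun_prop : Continuous _).intervalIntegrable 0 t), decayPath_of_nonneg ht]
  · simp
  · intro u hu
    rw [uIcc_of_le ht] at hu
    simp only [decayControl, delayTerm, decayPath_of_nonneg hu.1]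
    ring

end DecayPath

section DelayTerm

variable {T L η₀ s : ℝ} {a w : ℝ → ℝ}

theorem delayTerm_eq_setIntegral {x : ℝ → ℝ} (hT : 0 ≤ T) :
    delayTerm T a x s = ∫ ξ in Ioc (-T) 0, a ξ * x (s + ξ) :=
  intervalIntegral.integral_of_le (by linarith)

theorem integrableOn_young_bound (ha : MemLp a 2 (volume.restrict (Ioc (-T) 0)))
    (hw : IntegrableOn (fun u => w u ^ 2) (Ico (-T) 0)) (s : ℝ) :
    IntegrableOn (fun ξ => (a ξ ^ 2 + history T w (s + ξ) ^ 2) / 2) (Ioc (-T) 0) :=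
  (ha.integrable_sq.add
    ((integrable_history_sq hw).comp_add_left s).integrableOn).div_const 2

theorem integral_young_bound_le (ha : MemLp a 2 (volume.restrict (Ioc (-T) 0)))
    (hw : IntegrableOn (fun u => w u ^ 2) (Ico (-T) 0)) (s : ℝ) :
    ∫ ξ in Ioc (-T) 0, (a ξ ^ 2 + history T w (s + ξ) ^ 2) / 2 ≤ historyBound T a w := by
  have hh := (integrable_history_sq hw).comp_add_left s
  rw [integral_div, integral_add ha.integrable_sq hh.integrableOn, historyBound]
  gcongr
  calc ∫ ξ in Ioc (-T) 0, history T w (s + ξ) ^ 2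
      ≤ ∫ ξ, history T w (s + ξ) ^ 2 :=
        setIntegral_le_integral hh (ae_of_all _ fun _ => sq_nonneg _)
    _ = ∫ u, history T w u ^ 2 := integral_add_left_eq_self (fun u => history T w u ^ 2) s

theorem integrableOn_mul_decayPath (ha : MemLp a 2 (volume.restrict (Ioc (-T) 0)))
    (hw : StronglyMeasurable w) (hw2 : IntegrableOn (fun u => w u ^ 2) (Ico (-T) 0))
    (hη₀ : 0 ≤ η₀) (hL : 0 ≤ L) (s : ℝ) :
    IntegrableOn (fun ξ => a ξ * decayPath T L η₀ w (s + ξ)) (Ioc (-T) 0) :=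
  ((integrableOn_young_bound ha hw2 s).add
      (((ha.integrable one_le_two).abs).const_mul η₀)).mono'
    (ha.aestronglyMeasurable.mul
      ((stronglyMeasurable_decayPath hw).comp_measurable
        (measurable_const_add s)).aestronglyMeasurable)
    (ae_of_all _ fun ξ => abs_mul_decayPath_le hη₀ hL ξ s)

theorem neg_historyBound_le_delayTerm (hT : 0 ≤ T) (ha : MemLp a 2 (volume.restrict (Ioc (-T) 0)))
    (ha0 : ∀ ξ ∈ Icc (-T) 0, 0 ≤ a ξ) (hw : StronglyMeasurable w)
    (hw2 : IntegrableOn (fun u => w u ^ 2) (Ico (-T) 0)) (hη₀ : 0 ≤ η₀) (hL : 0 ≤ L) (s : ℝ) :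
    -historyBound T a w ≤ delayTerm T a (decayPath T L η₀ w) s := by
  rw [delayTerm_eq_setIntegral hT]
  calc -historyBound T a w
      ≤ -∫ ξ in Ioc (-T) 0, (a ξ ^ 2 + history T w (s + ξ) ^ 2) / 2 :=
        neg_le_neg (integral_young_bound_le ha hw2 s)
    _ = ∫ ξ in Ioc (-T) 0, -((a ξ ^ 2 + history T w (s + ξ) ^ 2) / 2) := (integral_neg _).symm
    _ ≤ ∫ ξ in Ioc (-T) 0, a ξ * decayPath T L η₀ w (s + ξ) := by
        refine setIntegral_mono_on (integrableOn_young_bound ha hw2 s).neg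
          (integrableOn_mul_decayPath ha hw hw2 hη₀ hL s) measurableSet_Ioc fun ξ hξ => ?_
        have ha0ξ := ha0 ξ (Ioc_subset_Icc_self hξ)
        calc -((a ξ ^ 2 + history T w (s + ξ) ^ 2) / 2)
            ≤ a ξ * history T w (s + ξ) :=
              neg_le_of_abs_le (abs_mul_le_add_sq_div_two _ _)
          _ ≤ a ξ * decayPath T L η₀ w (s + ξ) :=
              mul_le_mul_of_nonneg_left (history_le_decayPath hη₀ _) ha0ξ

theorem abs_delayTerm_le (hT : 0 ≤ T) (ha : MemLp a 2 (volume.restrict (Ioc (-T) 0)))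
    (hw2 : IntegrableOn (fun u => w u ^ 2) (Ico (-T) 0)) (hη₀ : 0 ≤ η₀) (hL : 0 ≤ L) (s : ℝ) :
    |delayTerm T a (decayPath T L η₀ w) s| ≤
      historyBound T a w + η₀ * ∫ ξ in Ioc (-T) 0, |a ξ| := by
  have habs := (ha.integrable one_le_two).abs
  rw [delayTerm_eq_setIntegral hT]
  calc |∫ ξ in Ioc (-T) 0, a ξ * decayPath T L η₀ w (s + ξ)|
      ≤ ∫ ξ in Ioc (-T) 0, |a ξ * decayPath T L η₀ w (s + ξ)| := abs_integral_le_integral_abs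
    _ ≤ ∫ ξ in Ioc (-T) 0, ((a ξ ^ 2 + history T w (s + ξ) ^ 2) / 2 + η₀ * |a ξ|) :=
        integral_mono_of_nonneg (ae_of_all _ fun _ => abs_nonneg _)
          ((integrableOn_young_bound ha hw2 s).fun_add (habs.const_mul η₀))
          (ae_of_all _ fun ξ => abs_mul_decayPath_le hη₀ hL ξ s)
    _ ≤ historyBound T a w + η₀ * ∫ ξ in Ioc (-T) 0, |a ξ| := by
        rw [integral_add (integrableOn_young_bound ha hw2 s) (habs.const_mul η₀),
          integral_const_mul]
        exact add_le_add (integral_young_bound_le ha hw2 s) le_rfl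

theorem delayTerm_nonneg_of_le (ha0 : ∀ ξ ∈ Icc (-T) 0, 0 ≤ a ξ) (hη₀ : 0 ≤ η₀) (hT : 0 ≤ T)
    (hs : T ≤ s) : 0 ≤ delayTerm T a (decayPath T L η₀ w) s :=
  intervalIntegral.integral_nonneg (by linarith) fun ξ hξ =>
    mul_nonneg (ha0 ξ hξ) (decayPath_nonneg_of_nonneg hη₀ (by linarith [hξ.1]))

theorem aestronglyMeasurable_delayTerm {x : ℝ → ℝ} (hT : 0 ≤ T)
    (ha : AEStronglyMeasurable a (volume.restrict (Ioc (-T) 0))) (hx : StronglyMeasurable x) :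
    AEStronglyMeasurable (delayTerm T a x) volume := by
  simp_rw [funext fun s => delayTerm_eq_setIntegral (a := a) (x := x) (s := s) hT]
  exact (ha.comp_snd.mul (hx.comp_measurable (measurable_fst.add measurable_snd)
    ).aestronglyMeasurable).integral_prod_right'

end DelayTerm

section DecayControl

variable {T r L η₀ s : ℝ} {a w x : ℝ → ℝ} {f₀ : ℝ × ℝ → ℝ}

theorem le_decayControl {K : NNReal} {y : ℝ} (hmono : ∀ x, Monotone fun y => f₀ (x, y))
    (hlip : LipschitzWith K f₀) (hx : 0 ≤ x s)
    (hy : y ≤ delayTerm T a x s) :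
    r * x s + f₀ (0, y) ≤ decayControl T r K a f₀ x s := by
  have h₁ := hlip.sub_mul_abs_le (x s) y
  have h₂ := hmono (x s) hy
  rw [abs_of_nonneg hx] at h₁
  simp only [decayControl]
  linarith

theorem aestronglyMeasurable_decayControl (hT : 0 ≤ T)
    (ha : AEStronglyMeasurable a (volume.restrict (Ioc (-T) 0))) (hf : Continuous f₀)
    (hx : StronglyMeasurable x) : AEStronglyMeasurable (decayControl T r L a f₀ x) volume :=
  (hx.aestronglyMeasurable.const_mul (r + L)).add
    (hf.comp_aestronglyMeasurable (hx.aestronglyMeasurable.prodMk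
      (aestronglyMeasurable_delayTerm hT ha hx)))

theorem exists_bound_decayControl {X G : ℝ} (hf : Continuous f₀)
    (hX : ∀ s ∈ Ici (0 : ℝ), |x s| ≤ X)
    (hG : ∀ s ∈ Ici (0 : ℝ), |delayTerm T a x s| ≤ G) :
    ∃ M, ∀ s ∈ Ici (0 : ℝ), ‖decayControl T r L a f₀ x s‖ ≤ M := by
  obtain ⟨C, hC⟩ := (isCompact_closedBall (0 : ℝ × ℝ) (max X G)).exists_bound_of_continuousOn
    hf.continuousOn
  refine ⟨|r + L| * X + C, fun s hs => ?_⟩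
  have hmem : (x s, delayTerm T a x s) ∈ Metric.closedBall (0 : ℝ × ℝ) (max X G) := by
    rw [mem_closedBall_zero_iff, Prod.norm_def, Real.norm_eq_abs, Real.norm_eq_abs]
    exact max_le_max (hX s hs) (hG s hs)
  rw [decayControl, Real.norm_eq_abs]
  refine (abs_add_le _ _).trans (add_le_add ?_ (hC _ hmem))
  rw [abs_mul]
  exact mul_le_mul_of_nonneg_left (hX s hs) (abs_nonneg _)

end DecayControl

section Strategy

variable {T r η₀ : ℝ} {K : NNReal} {a w : ℝ → ℝ} {f₀ : ℝ × ℝ → ℝ}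

theorem le_decayControl_decayPath (hT : 0 ≤ T) (ha : MemLp a 2 (volume.restrict (Ioc (-T) 0)))
    (ha0 : ∀ ξ ∈ Icc (-T) 0, 0 ≤ a ξ) (hw : StronglyMeasurable w)
    (hw2 : IntegrableOn (fun u => w u ^ 2) (Ico (-T) 0)) (hη₀ : 0 ≤ η₀)
    (hmono : ∀ x, Monotone fun y => f₀ (x, y)) (hlip : LipschitzWith K f₀) {s : ℝ}
    (hs : 0 ≤ s) :
    r * (η₀ * exp (-(K * s))) + f₀ (0, -historyBound T a w) ≤
      decayControl T r K a f₀ (decayPath T K η₀ w) s := by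
  rw [← decayPath_of_nonneg (T := T) (w := w) hs]
  exact le_decayControl hmono hlip (decayPath_nonneg_of_nonneg hη₀ hs)
    (neg_historyBound_le_delayTerm hT ha ha0 hw hw2 hη₀ K.2 s)

theorem decayControl_decayPath_nonneg (hT : 0 ≤ T) (hr : 0 ≤ r)
    (ha : MemLp a 2 (volume.restrict (Ioc (-T) 0))) (ha0 : ∀ ξ ∈ Icc (-T) 0, 0 ≤ a ξ)
    (hw : StronglyMeasurable w) (hw2 : IntegrableOn (fun u => w u ^ 2) (Ico (-T) 0))
    (hη₀ : 0 ≤ η₀) (hmono : ∀ x, Monotone fun y => f₀ (x, y)) (hlip : LipschitzWith K f₀)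
    (hf₀ : 0 ≤ f₀ (0, 0)) (hlarge : |f₀ (0, -historyBound T a w)| ≤ r * η₀ * exp (-(K * T)))
    {s : ℝ} (hs : 0 ≤ s) : 0 ≤ decayControl T r K a f₀ (decayPath T K η₀ w) s := by
  rcases le_or_gt T s with hTs | hsT
  · -- past time `T` the history no longer enters the delay term, which is then nonnegative
    have hx := decayPath_nonneg_of_nonneg (T := T) (L := K) (w := w) hη₀ hs
    calc 0 ≤ r * decayPath T K η₀ w s + f₀ (0, 0) := add_nonneg (mul_nonneg hr hx) hf₀
      _ ≤ _ := le_decayControl hmono hlip hx (delayTerm_nonneg_of_le ha0 hη₀ hT hTs)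
  · have hdecay : r * η₀ * exp (-(K * T)) ≤ r * (η₀ * exp (-(K * s))) := by
      rw [← mul_assoc]
      gcongr
    calc 0 ≤ r * (η₀ * exp (-(K * s))) + f₀ (0, -historyBound T a w) := by
          linarith [neg_abs_le (f₀ (0, -historyBound T a w))]
      _ ≤ _ := le_decayControl_decayPath hT ha ha0 hw hw2 hη₀ hmono hlip hs

theorem isControl_decayControl_decayPath (hT : 0 ≤ T)
    (ha : MemLp a 2 (volume.restrict (Ioc (-T) 0))) (hw : StronglyMeasurable w)
    (hw2 : IntegrableOn (fun u => w u ^ 2) (Ico (-T) 0)) (hη₀ : 0 ≤ η₀) (hf : Continuous f₀)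
    (h0 : ∀ s ∈ Ici (0 : ℝ), 0 ≤ decayControl T r K a f₀ (decayPath T K η₀ w) s) :
    IsControl (decayControl T r K a f₀ (decayPath T K η₀ w)) := by
  have hX : ∀ s ∈ Ici (0 : ℝ), |decayPath T K η₀ w s| ≤ η₀ := fun s hs => by
    simpa [history, not_lt.2 (mem_Ici.1 hs)] using abs_decayPath_le (T := T) (w := w) hη₀ K.2 s
  obtain ⟨M, hM⟩ := exists_bound_decayControl (r := r) hf hX
    fun s _ => abs_delayTerm_le hT ha hw2 hη₀ K.2 s
  exact .of_bounded (aestronglyMeasurable_decayControl hT ha.aestronglyMeasurable hf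
    (stronglyMeasurable_decayPath hw)) h0 hM

theorem tendsto_decayControl_decayPath_atTop (hT : 0 ≤ T) (hr : 0 < r)
    (ha : MemLp a 2 (volume.restrict (Ioc (-T) 0))) (ha0 : ∀ ξ ∈ Icc (-T) 0, 0 ≤ a ξ)
    (hw : StronglyMeasurable w) (hw2 : IntegrableOn (fun u => w u ^ 2) (Ico (-T) 0))
    (hmono : ∀ x, Monotone fun y => f₀ (x, y)) (hlip : LipschitzWith K f₀) {t : ℝ}
    (ht : 0 ≤ t) :
    Tendsto (fun η₀ => decayControl T r K a f₀ (decayPath T K η₀ w) t) atTop atTop :=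
  tendsto_atTop_mono' _ ((eventually_ge_atTop 0).mono fun _η₀ hη₀ =>
      le_decayControl_decayPath hT ha ha0 hw hw2 hη₀ hmono hlip ht)
    (tendsto_atTop_add_const_right _ _
      ((tendsto_id.atTop_mul_const (exp_pos _)).const_mul_atTop hr))

end Strategy

theorem integrableOn_exp_mul_comp_exp_toNNReal {ρ C : ℝ} {U : ℝ → ℝ} (hρ : 0 < ρ)
    (h : IntegrableOn (fun t => exp (-ρ * t) * U (exp (-C * t))) (Ioi 0)) :
    IntegrableOn (fun t => exp (-ρ * t) * U (exp (-(C.toNNReal * t)))) (Ioi 0) := by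
  rcases le_total 0 C with hC | hC
  · simpa [Real.coe_toNNReal _ hC, neg_mul] using h
  · have h1 : IntegrableOn (fun t => exp (-ρ * t) * U 1) (Ioi 0) :=
      (exp_neg_integrableOn_Ioi 0 hρ).mul_const (U 1)
    simpa [Real.toNNReal_of_nonpos hC] using h1

theorem norm_payoff_decayPath_le {ρ T L η₀ t M₁ M₂ : ℝ} {U₁ U₂ c w : ℝ → ℝ}
    (hU₁ : ∀ s, 0 ≤ s → |U₁ s| ≤ M₁) (hU₂ : ∀ s, 0 < s → U₂ s ≤ M₂)
    (hU₂mono : MonotoneOn U₂ (Ioi 0)) (hη₀ : 1 ≤ η₀) (hc : 0 ≤ c t) (ht : 0 ≤ t) :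
    ‖payoff ρ U₁ U₂ c (decayPath T L η₀ w) t‖ ≤
      exp (-ρ * t) * (M₁ + |M₂|) + |exp (-ρ * t) * U₂ (exp (-(L * t)))| := by
  have hx := decayPath_pos (T := T) (L := L) (w := w) (η₀ := η₀) (by linarith) ht
  refine norm_payoff_le (hU₁ _ hc) ?_ (hU₂ _ hx)
  rw [decayPath_of_nonneg ht] at hx ⊢
  exact hU₂mono (exp_pos _) hx (le_mul_of_one_le_left (exp_pos _).le hη₀)

theorem exists_tendsto_mem_Jset {T r ρ Cf : ℝ} {a : ℝ → ℝ} {f₀ : ℝ × ℝ → ℝ} {U₁ U₂ : ℝ → ℝ}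
    {Ub₁ Ub₂ : ℝ} (hT : 0 < T) (hr : 0 < r) (hρ : 0 < ρ) (ha : AHyp T a) (hf : FHyp Cf f₀)
    (hU : UHyp ρ Cf U₁ U₂) (hU₁lim : Tendsto U₁ atTop (𝓝 Ub₁))
    (hU₂lim : Tendsto U₂ atTop (𝓝 Ub₂)) (η₁ : Lp ℝ 2 (μT T)) :
    ∃ J : ℝ → ℝ, (∀ᶠ η₀ in atTop, J η₀ ∈ Jset T r ρ a f₀ U₁ U₂ (η₀, η₁)) ∧
      Tendsto J atTop (𝓝 ((Ub₁ + Ub₂) / ρ)) := by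
  set K := Cf.toNNReal
  have ha2 : MemLp a 2 (volume.restrict (Ioc (-T) 0)) :=
    ha.mem.mono_measure (Measure.restrict_mono Ioc_subset_Icc_self le_rfl)
  have hw := Lp.stronglyMeasurable η₁
  have hw2 : IntegrableOn (fun u => η₁ u ^ 2) (Ico (-T) 0) :=
    IntegrableOn.mono_set (Lp.memLp η₁).integrable_sq Ico_subset_Icc_self
  set x := fun η₀ => decayPath T K η₀ η₁
  set c := fun η₀ => decayControl T r K a f₀ (x η₀)
  set D := f₀ (0, -historyBound T a η₁)
  have hlarge : ∀ᶠ η₀ in atTop, 1 ≤ η₀ ∧ |D| ≤ r * η₀ * exp (-(K * T)) :=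
    (eventually_ge_atTop 1).and (tendsto_atTop.1
      ((tendsto_id.const_mul_atTop hr).atTop_mul_const (exp_pos _)) |D|)
  have hc0 : ∀ᶠ η₀ in atTop, ∀ s ∈ Ici (0 : ℝ), 0 ≤ c η₀ s :=
    hlarge.mono fun η₀ h s hs => decayControl_decayPath_nonneg hT.le hr.le ha2 ha.nonneg hw hw2
      (by linarith [h.1]) hf.mono hf.lip (apply_zero_nonneg_of_pos hf.lip.continuous hf.pos) h.2 hs
  have hmeas : ∀ᶠ η₀ in atTop,
      AEStronglyMeasurable (payoff ρ U₁ U₂ (c η₀) (x η₀)) (volume.restrict (Ioi 0)) := by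
    filter_upwards [hlarge, hc0] with η₀ h h0
    exact aestronglyMeasurable_payoff hU.u1_cont hU.u2_cont
      (aestronglyMeasurable_decayControl hT.le ha2.aestronglyMeasurable hf.lip.continuous
        (stronglyMeasurable_decayPath hw)).restrict (fun t ht => h0 t (mem_Ici.2 ht.le))
      continuousOn_decayPath fun t ht => decayPath_pos (by linarith [h.1]) ht.le
  obtain ⟨M₁, hM₁⟩ := hU.u1_bdd
  obtain ⟨M₂, hM₂⟩ := hU.u2_bddAbove
  have hbound : ∀ᶠ η₀ in atTop, ∀ t ∈ Ioi (0 : ℝ), ‖payoff ρ U₁ U₂ (c η₀) (x η₀) t‖ ≤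
      exp (-ρ * t) * (M₁ + |M₂|) + |exp (-ρ * t) * U₂ (exp (-(K * t)))| := by
    filter_upwards [hlarge, hc0] with η₀ h h0 t ht
    exact norm_payoff_decayPath_le hM₁ hM₂ hU.u2_mono h.1 (h0 t (mem_Ici.2 ht.le)) ht.le
  have hint : IntegrableOn (fun t => exp (-ρ * t) * (M₁ + |M₂|) +
      |exp (-ρ * t) * U₂ (exp (-(K * t)))|) (Ioi 0) :=
    ((exp_neg_integrableOn_Ioi 0 hρ).mul_const _).add
      (integrableOn_exp_mul_comp_exp_toNNReal hρ hU.u2_int).abs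
  refine ⟨fun η₀ => ∫ t in Ioi 0, payoff ρ U₁ U₂ (c η₀) (x η₀) t, ?_,
    tendsto_integral_payoff hρ hmeas hbound hint
      (fun t ht => tendsto_decayControl_decayPath_atTop hT.le hr ha2 ha.nonneg hw hw2 hf.mono
        hf.lip (le_of_lt ht))
      (fun t ht => tendsto_decayPath_atTop (le_of_lt ht)) hU₁lim hU₂lim⟩
  · filter_upwards [hlarge, hc0, hmeas, hbound] with η₀ h h0 hm hb
    exact ⟨_, _, isControl_decayControl_decayPath hT.le ha2 hw hw2 (by linarith [h.1])
      hf.lip.continuous h0, isSol_decayPath η₁, fun t ht => decayPath_pos (by linarith [h.1]) ht,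
      hint.mono' hm ((ae_restrict_iff' measurableSet_Ioi).2 (ae_of_all _ hb)), rfl⟩

/-- With `Ū₁ = lim_{s→∞} U₁(s)` and `Ū₂ = lim_{s→∞} U₂(s)`,
for every fixed `η₁ ∈ L²([-T,0];ℝ)`, `lim_{η₀→∞} V(η₀,η₁) = (Ū₁ + Ū₂)/ρ`. -/
theorem value_function_limit_at_infinity
    (T r ρ Cf : ℝ) (hT : 0 < T) (hr : 0 < r) (hρ : 0 < ρ)
    (a : ℝ → ℝ) (ha : AHyp T a)
    (f₀ : ℝ × ℝ → ℝ) (hf : FHyp Cf f₀)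
    (U₁ U₂ : ℝ → ℝ) (hU : UHyp ρ Cf U₁ U₂)
    (Ub₁ Ub₂ : ℝ) (hU₁lim : Tendsto U₁ atTop (𝓝 Ub₁))
    (hU₂lim : Tendsto U₂ atTop (𝓝 Ub₂))
    (η₁ : Lp ℝ 2 (μT T)) :
    Tendsto (fun η₀ : ℝ => Vfn T r ρ a f₀ U₁ U₂ (η₀, η₁)) atTop
      (𝓝 ((Ub₁ + Ub₂) / ρ)) := by
  obtain ⟨J, hJ, hJlim⟩ := exists_tendsto_mem_Jset hT hr hρ ha hf hU hU₁lim hU₂lim η₁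
  have hU₁mono : MonotoneOn U₁ (Ici 0) :=
    (strictMonoOn_of_deriv_pos (convex_Ici 0) hU.u1_cont fun s hs =>
      hU.u1_deriv_pos s (by simpa using hs)).monotoneOn
  have hU₁le : ∀ s, 0 ≤ s → U₁ s ≤ Ub₁ := fun s hs =>
    hU₁mono.ge_of_tendsto_atTop (eventually_ge_atTop 0) hU₁lim hs
  have hU₂le : ∀ s, 0 < s → U₂ s ≤ Ub₂ := fun s hs =>
    hU.u2_mono.ge_of_tendsto_atTop (eventually_gt_atTop 0) hU₂lim hs
  exact tendsto_csSup_of_eventually_mem hJ (fun _ _ hv => le_of_mem_Jset hρ hU₁le hU₂le hv) hJlim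
end
end

section
/- Let 𝒟 ⊂ H be a nonempty convex set that is open with respect to ‖·‖_{-1}, and let v : 𝒟 → ℝ be concave and continuous with respect to ‖·‖_{-1}. Then for every η ∈ 𝒟, every element of the superdifferential D⁺v(η) belongs to D(A*): if ζ = (ζ₀,ζ₁) ∈ H satisfies v(η′) − v(η) ≤ ⟨η′ − η, ζ⟩ for all η′ ∈ 𝒟, then ζ₁ ∈ W^{1,2}([-T,0];ℝ) and ζ₁(-T) = 0. -/
open MeasureTheory Real Set Filter Topology

noncomputable section

/-- The inner product of `H = ℝ × L²([-T,0];ℝ)`. -/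
def hinner (T : ℝ) (η ζ : Hsp T) : ℝ := η.1 * ζ.1 + ∫ s, η.2 s * ζ.2 s ∂(μT T)

/-- The (Hilbert) norm of `H = ℝ × L²([-T,0];ℝ)`. -/
def hnorm (T : ℝ) (η : Hsp T) : ℝ := Real.sqrt (η.1 ^ 2 + ‖η.2‖ ^ 2)

/-- The norm `‖η‖₋₁ = ‖A⁻¹η‖`, where `A⁻¹η = (η₀/r, s ↦ η₀/r - ∫_s^0 η₁(ξ)dξ)`. -/
def nrm1 (T r : ℝ) (η : Hsp T) : ℝ :=
  Real.sqrt ((η.1 / r) ^ 2 + ∫ s, (η.1 / r - ∫ ξ in s..(0:ℝ), η.2 ξ) ^ 2 ∂(μT T))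
/-- `(g, g')` is a `W^{1,2}` representative exhibiting membership `ζ ∈ D(A)`:
`g` represents `ζ₁`, has a.e. derivative `g' ∈ L²`, and `g(0) = ζ₀`. -/
structure DomARep (T : ℝ) (ζ : Hsp T) (g g' : ℝ → ℝ) : Prop where
  rep : ∀ᵐ s ∂(μT T), ζ.2 s = g s
  mem : MemLp g' 2 (μT T)
  fund : ∀ s ∈ Icc (-T) (0:ℝ), g s = g (-T) + ∫ ξ in (-T)..s, g' ξ
  boundary : g 0 = ζ.1

/-- `(h, h')` is a `W^{1,2}` representative exhibiting membership `ζ ∈ D(A*)`: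
`h` represents `ζ₁`, has a.e. derivative `h' ∈ L²`, and `h(-T) = 0`. -/
structure AstarRep (T : ℝ) (ζ : Hsp T) (h h' : ℝ → ℝ) : Prop where
  rep : ∀ᵐ s ∂(μT T), ζ.2 s = h s
  mem : MemLp h' 2 (μT T)
  fund : ∀ s ∈ Icc (-T) (0:ℝ), h s = h (-T) + ∫ ξ in (-T)..s, h' ξ
  zeroT : h (-T) = 0

/- Testing the superdifferential inequality at `η ± (0, φ)`, which lie in `𝒟` as soon as
`‖(0, φ)‖₋₁ = ‖V φ‖` is small, where `V φ (s) = ∫_s^0 φ`, bounds `φ ↦ ⟨φ, ζ₁⟩` by a multiple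
of `‖V φ‖`. Hahn–Banach on the range of `V` and the Riesz representation then give `w ∈ L²`
with `⟨φ, ζ₁⟩ = ⟨V φ, w⟩` for all `φ`, and by Fubini `⟨V φ, w⟩ = ⟨φ, W w⟩` where
`W w (ξ) = ∫_{-T}^ξ w`. Hence `ζ₁ = W w`, which vanishes at `-T` and has derivative `w ∈ L²`. -/

theorem LinearMap.abs_le_mul_norm_of_abs_lt_one {F E : Type*} [AddCommGroup F] [Module ℝ F]
    [SeminormedAddCommGroup E] [NormedSpace ℝ E] (V : F →ₗ[ℝ] E) (ℓ : F →ₗ[ℝ] ℝ) {δ : ℝ}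
    (hδ : 0 < δ) (h : ∀ x, ‖V x‖ < δ → |ℓ x| < 1) (x : F) : |ℓ x| ≤ δ⁻¹ * ‖V x‖ := by
  by_contra! hlt
  have hpos : 0 < |ℓ x| := lt_of_le_of_lt (by positivity) hlt
  have hsmall : ‖V (|ℓ x|⁻¹ • x)‖ < δ := by
    rw [map_smul, norm_smul, Real.norm_of_nonneg (by positivity), inv_mul_lt_iff₀ hpos]
    rwa [inv_mul_lt_iff₀ hδ, mul_comm] at hlt
  have := h _ hsmall
  rw [map_smul, smul_eq_mul, abs_mul, abs_inv, abs_abs, inv_mul_cancel₀ hpos.ne'] at this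
  exact lt_irrefl _ this

theorem LinearMap.exists_inner_eq_of_abs_le {F E : Type*} [AddCommGroup F] [Module ℝ F]
    [NormedAddCommGroup E] [InnerProductSpace ℝ E] [CompleteSpace E]
    (V : F →ₗ[ℝ] E) (ℓ : F →ₗ[ℝ] ℝ) (C : ℝ) (h : ∀ x, |ℓ x| ≤ C * ‖V x‖) :
    ∃ w : E, ∀ x, ℓ x = inner ℝ (V x) w := by
  have hker : LinearMap.ker V ≤ LinearMap.ker ℓ := fun x hx => by
    have := h x
    rw [LinearMap.mem_ker.1 hx, norm_zero, mul_zero, abs_nonpos_iff] at this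
    exact this
  let ℓ₀ : LinearMap.range V →ₗ[ℝ] ℝ :=
    ((LinearMap.ker V).liftQ ℓ hker).comp V.quotKerEquivRange.symm.toLinearMap
  have hℓ₀ : ∀ x, ℓ₀ ⟨V x, LinearMap.mem_range_self V x⟩ = ℓ x := fun x => by
    simp [ℓ₀, LinearMap.quotKerEquivRange_symm_apply_image]
  have hbound : ∀ y, ‖ℓ₀ y‖ ≤ C * ‖y‖ := by
    rintro ⟨_, x, rfl⟩
    exact (hℓ₀ x).symm ▸ h x
  obtain ⟨g, hg, -⟩ := exists_extension_norm_eq _ (ℓ₀.mkContinuous C hbound)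
  refine ⟨(InnerProductSpace.toDual ℝ E).symm g, fun x => ?_⟩
  rw [real_inner_comm, InnerProductSpace.toDual_symm_apply, ← hℓ₀]
  exact (hg ⟨V x, LinearMap.mem_range_self V x⟩).symm

theorem integral_setIntegral_Ioi_mul (μ : Measure ℝ) [SFinite μ] {f g : ℝ → ℝ}
    (hf : Integrable f μ) (hg : Integrable g μ) :
    ∫ s, (∫ ξ in Ioi s, g ξ ∂μ) * f s ∂μ = ∫ ξ, g ξ * ∫ s in Iio ξ, f s ∂μ ∂μ := by
  set F : ℝ → ℝ → ℝ := fun s ξ => {p : ℝ × ℝ | p.1 < p.2}.indicator (fun p => f p.1 * g p.2) (s, ξ)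
  have hF : Integrable (Function.uncurry F) (μ.prod μ) :=
    (hf.mul_prod hg).indicator (measurableSet_lt measurable_fst measurable_snd)
  have hleft : ∀ s ξ, F s ξ = (Ioi s).indicator g ξ * f s := fun s ξ => by
    by_cases h : s < ξ <;> simp [F, h, mul_comm]
  have hright : ∀ s ξ, F s ξ = g ξ * (Iio ξ).indicator f s := fun s ξ => by
    by_cases h : s < ξ <;> simp [F, h, mul_comm]
  calc ∫ s, (∫ ξ in Ioi s, g ξ ∂μ) * f s ∂μ = ∫ s, ∫ ξ, F s ξ ∂μ ∂μ := by
        simp only [hleft, integral_mul_const, integral_indicator measurableSet_Ioi]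
    _ = ∫ ξ, ∫ s, F s ξ ∂μ ∂μ := integral_integral_swap hF
    _ = ∫ ξ, g ξ * ∫ s in Iio ξ, f s ∂μ ∂μ := by
        simp only [hright, integral_const_mul, integral_indicator measurableSet_Iio]

theorem intervalIntegral_eq_setIntegral_Ioi_restrict_Icc {a b s : ℝ} (hs : s ∈ Icc a b)
    (f : ℝ → ℝ) : ∫ ξ in s..b, f ξ = ∫ ξ in Ioi s, f ξ ∂(volume.restrict (Icc a b)) := by
  rw [intervalIntegral.integral_of_le hs.2, Measure.restrict_restrict measurableSet_Ioi]
  congr 2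
  ext ξ
  simp only [mem_Ioc, mem_inter_iff, mem_Ioi, mem_Icc]
  constructor
  · rintro ⟨h1, h2⟩; exact ⟨h1, hs.1.trans h1.le, h2⟩
  · rintro ⟨h1, -, h2⟩; exact ⟨h1, h2⟩

theorem intervalIntegral_eq_setIntegral_Iio_restrict_Icc {a b s : ℝ} (hs : s ∈ Icc a b)
    (f : ℝ → ℝ) : ∫ ξ in a..s, f ξ = ∫ ξ in Iio s, f ξ ∂(volume.restrict (Icc a b)) := by
  rw [intervalIntegral.integral_of_le hs.1, Measure.restrict_restrict measurableSet_Iio,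
    setIntegral_congr_set Ico_ae_eq_Ioc.symm]
  congr 2
  ext ξ
  simp only [mem_Ico, mem_inter_iff, mem_Iio, mem_Icc]
  constructor
  · rintro ⟨h1, h2⟩; exact ⟨h2, h1, h2.le.trans hs.2⟩
  · rintro ⟨h1, h2, -⟩; exact ⟨h2, h1⟩

theorem memLp_intervalIntegral_restrict_Icc (p : ENNReal) {f : ℝ → ℝ} {a b c : ℝ}
    (hf : IntegrableOn f (Icc a b)) (hc : c ∈ uIcc a b) :
    MemLp (fun s => ∫ ξ in c..s, f ξ) p (volume.restrict (Icc a b)) := by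
  have hcont : ContinuousOn (fun s => ∫ ξ in c..s, f ξ) (Icc a b) := by
    rcases le_or_gt a b with hab | hba
    · rw [← uIcc_of_le hab] at hf ⊢
      exact intervalIntegral.continuousOn_primitive_interval' hf.intervalIntegrable hc
    · rw [Icc_eq_empty_of_lt hba]
      exact continuousOn_empty _
  obtain ⟨C, hC⟩ := isCompact_Icc.exists_bound_of_continuousOn hcont
  exact MemLp.of_bound (hcont.aestronglyMeasurable measurableSet_Icc) C
    ((ae_restrict_iff' measurableSet_Icc).2 (ae_of_all _ hC))

section TailIntegral

variable {T : ℝ}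

instance : IsFiniteMeasure (μT T) := by
  unfold μT; infer_instance

theorem memLp_setIntegral_Ioi_μT (φ : Lp ℝ 2 (μT T)) :
    MemLp (fun s => ∫ ξ in Ioi s, φ ξ ∂(μT T)) 2 (μT T) := by
  refine (memLp_intervalIntegral_restrict_Icc 2 ((Lp.memLp φ).integrable one_le_two)
    right_mem_uIcc).neg.ae_eq ?_
  filter_upwards [ae_restrict_mem measurableSet_Icc] with s hs
  rw [Pi.neg_apply, ← intervalIntegral.integral_symm]
  exact intervalIntegral_eq_setIntegral_Ioi_restrict_Icc hs _

/- `φ ↦ (s ↦ ∫_s^0 φ)`, written against `μT T` rather than as an interval integral so that it is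
additive in `φ` at every `s`, not only for `s ∈ [-T, 0]`. -/
variable (T) in
def tailIntegral : Lp ℝ 2 (μT T) →ₗ[ℝ] Lp ℝ 2 (μT T) where
  toFun φ := (memLp_setIntegral_Ioi_μT φ).toLp _
  map_add' φ ψ := by
    rw [← MemLp.toLp_add]
    refine MemLp.toLp_congr _ _ (ae_of_all _ fun s => ?_)
    dsimp only
    rw [Pi.add_apply, integral_congr_ae (ae_restrict_of_ae (Lp.coeFn_add φ ψ))]
    exact integral_add ((Lp.memLp φ).integrable one_le_two).integrableOn
      ((Lp.memLp ψ).integrable one_le_two).integrableOn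
  map_smul' c φ := by
    rw [RingHom.id_apply, ← MemLp.toLp_const_smul]
    refine MemLp.toLp_congr _ _ (ae_of_all _ fun s => ?_)
    dsimp only
    rw [Pi.smul_apply, integral_congr_ae (ae_restrict_of_ae (Lp.coeFn_smul c φ))]
    exact integral_smul c _

theorem coeFn_tailIntegral (φ : Lp ℝ 2 (μT T)) :
    tailIntegral T φ =ᵐ[μT T] fun s => ∫ ξ in s..0, φ ξ := by
  filter_upwards [MemLp.coeFn_toLp (memLp_setIntegral_Ioi_μT φ),
    ae_restrict_mem measurableSet_Icc] with s hs hsT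
  exact hs.trans (intervalIntegral_eq_setIntegral_Ioi_restrict_Icc hsT _).symm

theorem memLp_intervalIntegral_μT (w : Lp ℝ 2 (μT T)) :
    MemLp (fun ξ => ∫ s in (-T)..ξ, w s) 2 (μT T) :=
  memLp_intervalIntegral_restrict_Icc 2 ((Lp.memLp w).integrable one_le_two) left_mem_uIcc

variable (T) in
def primitive (w : Lp ℝ 2 (μT T)) : Lp ℝ 2 (μT T) :=
  (memLp_intervalIntegral_μT w).toLp _

theorem coeFn_primitive (w : Lp ℝ 2 (μT T)) :
    primitive T w =ᵐ[μT T] fun ξ => ∫ s in (-T)..ξ, w s :=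
  MemLp.coeFn_toLp _

theorem inner_tailIntegral (φ w : Lp ℝ 2 (μT T)) :
    inner ℝ (tailIntegral T φ) w = inner ℝ φ (primitive T w) := by
  rw [L2.inner_def, L2.inner_def]
  calc ∫ s, inner ℝ (tailIntegral T φ s) (w s) ∂(μT T)
      = ∫ s, (∫ ξ in Ioi s, φ ξ ∂(μT T)) * w s ∂(μT T) := by
        refine integral_congr_ae ?_
        filter_upwards [MemLp.coeFn_toLp (memLp_setIntegral_Ioi_μT φ)] with s hs
        rw [Real.inner_apply, ← hs]; rfl
    _ = ∫ ξ, φ ξ * ∫ s in Iio ξ, w s ∂(μT T) ∂(μT T) :=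
        integral_setIntegral_Ioi_mul _ ((Lp.memLp w).integrable one_le_two)
          ((Lp.memLp φ).integrable one_le_two)
    _ = ∫ ξ, inner ℝ (φ ξ) (primitive T w ξ) ∂(μT T) := by
        refine integral_congr_ae ?_
        filter_upwards [coeFn_primitive w, ae_restrict_mem measurableSet_Icc] with ξ hξ hξT
        rw [Real.inner_apply, hξ, intervalIntegral_eq_setIntegral_Iio_restrict_Icc hξT]
        rfl

theorem nrm1_zero_fst (r : ℝ) (φ : Lp ℝ 2 (μT T)) :
    nrm1 T r (0, φ) = ‖tailIntegral T φ‖ := by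
  rw [nrm1, ← Real.sqrt_sq (norm_nonneg _), ← real_inner_self_eq_norm_sq, L2.inner_def]
  simp only [zero_div, zero_sub, neg_sq, ne_eq, OfNat.ofNat_ne_zero, not_false_eq_true,
    zero_pow, zero_add]
  congr 1
  refine integral_congr_ae ?_
  filter_upwards [coeFn_tailIntegral φ] with s hs
  rw [Real.inner_apply, hs, sq]

theorem hinner_zero_fst (φ : Lp ℝ 2 (μT T)) (ζ : Hsp T) :
    hinner T (0, φ) ζ = inner ℝ ζ.2 φ := by
  simp [hinner, L2.inner_def, mul_comm]

end TailIntegral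

theorem astarRep_of_snd_eq_primitive {T : ℝ} {ζ : Hsp T} {w : Lp ℝ 2 (μT T)}
    (h : ζ.2 = primitive T w) : AstarRep T ζ (fun ξ => ∫ s in (-T)..ξ, w s) w where
  rep := h ▸ coeFn_primitive w
  mem := Lp.memLp w
  fund _ _ := by simp
  zeroT := intervalIntegral.integral_same

theorem abs_inner_lt_one_of_superdifferential {T r δ : ℝ} {𝒟 : Set (Hsp T)} {v : Hsp T → ℝ}
    {η ζ : Hsp T} (hδ : ∀ η', nrm1 T r (η' - η) < δ → η' ∈ 𝒟 ∧ |v η' - v η| < 1)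
    (hsup : ∀ η' ∈ 𝒟, v η' - v η ≤ hinner T (η' - η) ζ)
    {φ : Lp ℝ 2 (μT T)} (hφ : ‖tailIntegral T φ‖ < δ) : |inner ℝ ζ.2 φ| < 1 := by
  have hlower : ∀ ψ, ‖tailIntegral T ψ‖ < δ → -1 < inner ℝ ζ.2 ψ := fun ψ hψ => by
    have hsub : (η + (0, ψ)) - η = (0, ψ) := add_sub_cancel_left _ _
    obtain ⟨hmem, hv⟩ := hδ (η + (0, ψ)) (by rwa [hsub, nrm1_zero_fst])
    have := hsup _ hmem
    rw [hsub, hinner_zero_fst] at this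
    linarith [(abs_lt.1 hv).1]
  have hneg := hlower (-φ) (by rwa [map_neg, norm_neg])
  rw [inner_neg_right] at hneg
  exact abs_lt.2 ⟨hlower φ hφ, by linarith⟩

theorem superdifferential_subset_domain_adjoint_general
    (T r : ℝ)
    (𝒟 : Set (Hsp T))
    (hopen : ∀ η ∈ 𝒟, ∃ ε : ℝ, 0 < ε ∧ ∀ η' : Hsp T, nrm1 T r (η' - η) < ε → η' ∈ 𝒟)
    (v : Hsp T → ℝ)
    (hcont : ∀ η ∈ 𝒟, ∀ ε : ℝ, 0 < ε → ∃ δ : ℝ, 0 < δ ∧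
      ∀ η' ∈ 𝒟, nrm1 T r (η' - η) < δ → |v η' - v η| < ε) :
    ∀ η ∈ 𝒟, ∀ ζ : Hsp T,
      (∀ η' ∈ 𝒟, v η' - v η ≤ hinner T (η' - η) ζ) →
      ∃ h h' : ℝ → ℝ, AstarRep T ζ h h' := by
  intro η hη ζ hsup
  obtain ⟨ε, hε, hball⟩ := hopen η hη
  obtain ⟨δ, hδ, hvδ⟩ := hcont η hη 1 one_pos
  have hloc : ∀ η', nrm1 T r (η' - η) < min ε δ → η' ∈ 𝒟 ∧ |v η' - v η| < 1 := fun η' h' =>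
    have hmem := hball η' (h'.trans_le (min_le_left _ _))
    ⟨hmem, hvδ η' hmem (h'.trans_le (min_le_right _ _))⟩
  obtain ⟨w, hw⟩ := (tailIntegral T).exists_inner_eq_of_abs_le (innerSL ℝ ζ.2).toLinearMap _
    ((tailIntegral T).abs_le_mul_norm_of_abs_lt_one _ (lt_min hε hδ)
      fun _ => abs_inner_lt_one_of_superdifferential hloc hsup)
  have hζ : ζ.2 = primitive T w := ext_inner_right ℝ fun φ => by
    rw [← innerSL_apply_apply ℝ, ← ContinuousLinearMap.coe_coe, hw, inner_tailIntegral,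
      real_inner_comm]
  exact ⟨_, _, astarRep_of_snd_eq_primitive hζ⟩

/-- Let `𝒟 ⊆ H` be nonempty, convex and open for `‖·‖₋₁`, and
let `v : 𝒟 → ℝ` be concave and `‖·‖₋₁`-continuous. Then every element of the
superdifferential `D⁺v(η)`, `η ∈ 𝒟`, belongs to `D(A*)`: its second component
has a `W^{1,2}` representative vanishing at `-T`. -/
theorem superdifferential_subset_domain_adjoint
    (T r : ℝ) (hT : 0 < T) (hr : 0 < r)
    (𝒟 : Set (Hsp T)) (hne : 𝒟.Nonempty) (hconv : Convex ℝ 𝒟)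
    (hopen : ∀ η ∈ 𝒟, ∃ ε : ℝ, 0 < ε ∧ ∀ η' : Hsp T, nrm1 T r (η' - η) < ε → η' ∈ 𝒟)
    (v : Hsp T → ℝ) (hconc : ConcaveOn ℝ 𝒟 v)
    (hcont : ∀ η ∈ 𝒟, ∀ ε : ℝ, 0 < ε → ∃ δ : ℝ, 0 < δ ∧
      ∀ η' ∈ 𝒟, nrm1 T r (η' - η) < δ → |v η' - v η| < ε) :
    ∀ η ∈ 𝒟, ∀ ζ : Hsp T,
      (∀ η' ∈ 𝒟, v η' - v η ≤ hinner T (η' - η) ζ) →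
      ∃ h h' : ℝ → ℝ, AstarRep T ζ h h' :=
  superdifferential_subset_domain_adjoint_general T r 𝒟 hopen v hcont
end
end
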